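/- Let θ_t and ϑ_t be two sequences in a normed vector space with θ_0 = ϑ_0, where ϑ_{t+1} = ϑ_t - η_t ∇L_t(ϑ_t) and θ_{t+1} = θ_t - η_t ∇L_t(θ_t) - η'_t g_t(θ_t - η_t ∇L_t(θ_t)), with each ∇L_t being β_t-Lipschitz and ‖g_t(·)‖ ≤ G_t everywhere, and η_t, η'_t, β_t, G_t ≥ 0. Then ‖θ_T - ϑ_T‖ ≤ exp(∑_{s<T} η_s β_s) · ∑_{t<T} η'_t G_t. -/

import Mathlib

open Finset

section GradientStep

variable {V : Type*} [NormedAddCommGroup V] [NormedSpace ℝ V]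

theorem norm_gradient_step_sub_le {f : V → V} {β η : ℝ} (hη : 0 ≤ η)
    (hf : ∀ x y, ‖f x - f y‖ ≤ β * ‖x - y‖) (x y : V) :
    ‖(x - η • f x) - (y - η • f y)‖ ≤ (1 + η * β) * ‖x - y‖ :=
  calc ‖(x - η • f x) - (y - η • f y)‖
      = ‖(x - y) - η • (f x - f y)‖ := by rw [smul_sub]; abel_nf
    _ ≤ ‖x - y‖ + η * ‖f x - f y‖ := by
        simpa only [norm_smul_of_nonneg hη] using norm_sub_le (x - y) (η • (f x - f y))
    _ ≤ ‖x - y‖ + η * (β * ‖x - y‖) := by gcongr; exact hf x y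
    _ = (1 + η * β) * ‖x - y‖ := by ring

theorem norm_perturbed_gradient_step_sub_le {f : V → V} {β η η' G : ℝ} (hη : 0 ≤ η)
    (hη' : 0 ≤ η') (hf : ∀ x y, ‖f x - f y‖ ≤ β * ‖x - y‖) {v : V} (hv : ‖v‖ ≤ G)
    (x y : V) :
    ‖(x - η • f x - η' • v) - (y - η • f y)‖ ≤ (1 + η * β) * ‖x - y‖ + η' * G :=
  calc ‖(x - η • f x - η' • v) - (y - η • f y)‖
      = ‖((x - η • f x) - (y - η • f y)) - η' • v‖ := by abel_nf
    _ ≤ ‖(x - η • f x) - (y - η • f y)‖ + η' * ‖v‖ := by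
        simpa only [norm_smul_of_nonneg hη'] using norm_sub_le _ (η' • v)
    _ ≤ (1 + η * β) * ‖x - y‖ + η' * G := by
        gcongr
        exact norm_gradient_step_sub_le hη hf x y

end GradientStep

theorem perturbed_gd_bounded_drift_general {V : Type*} [NormedAddCommGroup V] [NormedSpace ℝ V]
    (θ ϑ : ℕ → V) (gradL g : ℕ → V → V) (η η' β G : ℕ → ℝ)
    (hη : ∀ t, 0 ≤ η t) (hη' : ∀ t, 0 ≤ η' t) (hβ : ∀ t, 0 ≤ β t)
    (hlip : ∀ t x y, ‖gradL t x - gradL t y‖ ≤ β t * ‖x - y‖)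
    (hbound : ∀ t x, ‖g t x‖ ≤ G t)
    (h0 : θ 0 = ϑ 0)
    (hϑ : ∀ t, ϑ (t + 1) = ϑ t - η t • gradL t (ϑ t))
    (hθ : ∀ t, θ (t + 1) =
      θ t - η t • gradL t (θ t) - η' t • g t (θ t - η t • gradL t (θ t)))
    (T : ℕ) :
    ‖θ T - ϑ T‖ ≤ Real.exp (∑ s ∈ range T, η s * β s) * ∑ t ∈ range T, η' t * G t := by
  have hstep (t : ℕ) :
      ‖θ (t + 1) - ϑ (t + 1)‖ ≤ (1 + η t * β t) * ‖θ t - ϑ t‖ + η' t * G t := by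
    rw [hθ, hϑ]
    exact norm_perturbed_gradient_step_sub_le (hη t) (hη' t) (hlip t) (hbound t _) _ _
  have hG (t : ℕ) : 0 ≤ G t := (norm_nonneg _).trans (hbound t 0)
  have gronwall := discrete_gronwall (u := fun t ↦ ‖θ t - ϑ t‖) (norm_nonneg _)
    (fun t _ ↦ hstep t) (fun t _ ↦ mul_nonneg (hη t) (hβ t))
    (fun t _ ↦ mul_nonneg (hη' t) (hG t)) T.zero_le
  simpa [h0, ← range_eq_Ico, mul_comm] using gronwall

/-- Identically initialized gradient descent with and without a bounded per-round
perturbation step: the trajectories drift apart by at most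
`exp (∑_{s<T} η_s β_s) * ∑_{t<T} η'_t G_t`. -/
theorem perturbed_gd_bounded_drift {V : Type*} [NormedAddCommGroup V] [NormedSpace ℝ V]
    (θ ϑ : ℕ → V) (gradL g : ℕ → V → V) (η η' β G : ℕ → ℝ)
    (hη : ∀ t, 0 ≤ η t) (hη' : ∀ t, 0 ≤ η' t) (hβ : ∀ t, 0 ≤ β t) (hG : ∀ t, 0 ≤ G t)
    (hlip : ∀ t x y, ‖gradL t x - gradL t y‖ ≤ β t * ‖x - y‖)
    (hbound : ∀ t x, ‖g t x‖ ≤ G t)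
    (h0 : θ 0 = ϑ 0)
    (hϑ : ∀ t, ϑ (t + 1) = ϑ t - η t • gradL t (ϑ t))
    (hθ : ∀ t, θ (t + 1) =
      θ t - η t • gradL t (θ t) - η' t • g t (θ t - η t • gradL t (θ t)))
    (T : ℕ) :
    ‖θ T - ϑ T‖ ≤ Real.exp (∑ s ∈ range T, η s * β s) * ∑ t ∈ range T, η' t * G t :=
  perturbed_gd_bounded_drift_general θ ϑ gradL g η η' β G hη hη' hβ hlip hbound h0 hϑ hθ T
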